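/- arXiv:2212.06632 — 5 statements merged into one kernel-verified Lean document; each statement's English description precedes it below -/
import Mathlib

section
/- Let T : ℝ → ℝ be defined by T(x) = x/(1-x) if x ≤ 1/2 and T(x) = (2x-1)/x if x > 1/2. For every rational number r with 0 < r < 1, T(r) is again rational, and the denominator of T(r) written in lowest terms is strictly smaller than the denominator of r written in lowest terms. -/
noncomputable def T : ℝ → ℝ := fun x => if x ≤ 1/2 then x / (1 - x) else (2*x - 1) / x

theorem stmt2 (r : ℚ) (h0 : 0 < r) (h1 : r < 1) :
    ∃ s : ℚ, T (r : ℝ) = (s : ℝ) ∧ s.den < r.den := by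
  have hnum : 0 < r.num := Rat.num_pos.mpr h0
  have hden : (0 : ℤ) < (r.den : ℤ) := by exact_mod_cast r.pos
  have hd : ((r.den : ℚ)) ≠ 0 := by exact_mod_cast ne_of_gt hden
  have hmul : r * (r.den : ℚ) = (r.num : ℚ) := by
    nth_rewrite 1 [← Rat.num_div_den r]
    rw [div_mul_cancel₀ _ hd]
  have hlt : r.num < (r.den : ℤ) := by
    by_contra h
    push_neg at h
    have : (1 : ℚ) ≤ r := by
      rw [← Rat.num_div_den r, le_div_iff₀ (by exact_mod_cast r.pos), one_mul]
      exact_mod_cast h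
    linarith
  have hr1 : (1 : ℚ) - r ≠ 0 := by intro h; nlinarith [sub_eq_zero.mp h]
  have hr0 : r ≠ 0 := ne_of_gt h0
  by_cases hc : r ≤ 1/2
  · refine ⟨r / (1 - r), ?_, ?_⟩
    · simp only [T]
      rw [if_pos (show (r:ℝ) ≤ 1/2 by
        have := (Rat.cast_le (K := ℝ)).mpr hc; push_cast at this; linarith)]
      push_cast
      ring
    · have hqp : ((((r.den : ℤ) - r.num) : ℤ) : ℚ) ≠ 0 := by
        have h' : (0:ℤ) < (r.den : ℤ) - r.num := by omega
        exact_mod_cast ne_of_gt h'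
      have hs : r / (1 - r) = Rat.divInt r.num ((r.den : ℤ) - r.num) := by
        rw [Rat.divInt_eq_div, div_eq_div_iff hr1 hqp]
        push_cast
        linear_combination hmul
      have hdvd : ((r / (1 - r)).den : ℤ) ∣ ((r.den : ℤ) - r.num) := by
        rw [hs]; exact Rat.den_dvd _ _
      have h2 := Int.le_of_dvd (by omega) hdvd
      have : ((r / (1 - r)).den : ℤ) < (r.den : ℤ) := by omega
      exact_mod_cast this
  · push_neg at hc
    refine ⟨(2 * r - 1) / r, ?_, ?_⟩
    · simp only [T]
      rw [if_neg (show ¬ (r:ℝ) ≤ 1/2 by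
        push_neg
        have := (Rat.cast_lt (K := ℝ)).mpr hc; push_cast at this; linarith)]
      push_cast
      ring
    · have hp : ((r.num : ℤ) : ℚ) ≠ 0 := by exact_mod_cast ne_of_gt hnum
      have hs : (2 * r - 1) / r = Rat.divInt (2 * r.num - r.den) r.num := by
        rw [Rat.divInt_eq_div, div_eq_div_iff hr0 hp]
        push_cast
        linear_combination hmul
      have hdvd : (((2 * r - 1) / r).den : ℤ) ∣ r.num := by
        rw [hs]; exact Rat.den_dvd _ _
      have h2 := Int.le_of_dvd hnum hdvd
      have : (((2 * r - 1) / r).den : ℤ) < (r.den : ℤ) := by omega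
      exact_mod_cast this
end

section
/- Let T : ℝ → ℝ be defined by T(x) = x/(1-x) if x ≤ 1/2 and T(x) = (2x-1)/x if x > 1/2. For every rational number x with 0 < x ≤ 1 there exists a natural number m such that the m-th iterate T^[m](x) = 1. That is, the fixed point 1 attracts, in finitely many steps, every nonzero rational initial condition in the unit interval. -/
lemma den_le_of_eq_div (y : ℚ) (a b : ℤ) (hb : 0 < b) (h : y = (a : ℚ) / b) :
    (y.den : ℤ) ≤ b := by
  have : ((y.den : ℤ)) ∣ b := by
    rw [h, ← Rat.divInt_eq_div]; exact Rat.den_dvd a b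
  exact Int.le_of_dvd hb this

lemma key : ∀ n : ℕ, ∀ x : ℚ, x.den ≤ n → 0 < x → x ≤ 1 →
    ∃ m : ℕ, T^[m] (x : ℝ) = 1 := by
  intro n
  induction n with
  | zero => intro x hd _ _; exact absurd hd (by have := x.den_pos; omega)
  | succ n ih =>
    intro x hd h0 h1
    rcases eq_or_lt_of_le h1 with h1 | h1
    · exact ⟨0, by simp [h1]⟩
    have hnum : 0 < x.num := Rat.num_pos.mpr h0
    have hdQ : ((x.den : ℚ)) ≠ 0 := by exact_mod_cast x.den_pos.ne'
    have hxe : (x.num : ℚ) = x * x.den := (div_eq_iff hdQ).mp (Rat.num_div_den x)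
    have hlt : x.num < (x.den : ℤ) := by
      have : (x.num : ℚ) < x.den := by
        rw [hxe]; nlinarith [h1, (show (0:ℚ) < (x.den:ℚ) from by exact_mod_cast x.den_pos)]
      exact_mod_cast this
    by_cases hx : x ≤ 1/2
    · -- y = x / (1 - x)
      set y := x / (1 - x) with hy
      have hx1 : x < 1 := h1
      have hpos : (0:ℚ) < 1 - x := by linarith
      have hy0 : 0 < y := div_pos h0 hpos
      have hy1 : y ≤ 1 := by
        rw [hy, div_le_one hpos]; linarith
      have hq : (0:ℚ) < (((x.den : ℤ) - x.num : ℤ) : ℚ) := by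
        have : (0:ℤ) < (x.den : ℤ) - x.num := by omega
        exact_mod_cast this
      have hyeq : y = (x.num : ℚ) / ((x.den : ℤ) - x.num : ℤ) := by
        rw [hy, div_eq_div_iff hpos.ne' hq.ne']
        push_cast
        linear_combination -hxe
      have hden : (y.den : ℤ) ≤ (x.den : ℤ) - x.num := by
        exact den_le_of_eq_div y _ _ (by omega) hyeq
      have hdlt : y.den < x.den := by omega
      obtain ⟨m, hm⟩ := ih y (by omega) hy0 hy1
      refine ⟨m + 1, ?_⟩
      rw [Function.iterate_succ_apply]
      have hT : T (x : ℝ) = (y : ℝ) := by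
        have : ((x : ℝ)) ≤ 1/2 := by
          have := (Rat.cast_le (K := ℝ)).mpr hx
          simpa using this
        simp only [T, if_pos this, hy]
        push_cast
        ring
      rw [hT]; exact hm
    · push_neg at hx
      set y := (2 * x - 1) / x with hy
      have hy0 : 0 < y := div_pos (by linarith) h0
      have hy1 : y ≤ 1 := by rw [hy, div_le_one h0]; linarith
      have hnQ : (0:ℚ) < ((x.num : ℤ) : ℚ) := by exact_mod_cast hnum
      have hyeq : y = ((2 * x.num - x.den : ℤ) : ℚ) / (x.num : ℤ) := by
        rw [hy, div_eq_div_iff h0.ne' hnQ.ne']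
        push_cast
        linear_combination -hxe
      have hden : (y.den : ℤ) ≤ x.num := den_le_of_eq_div y _ _ hnum hyeq
      have hdlt : y.den < x.den := by omega
      obtain ⟨m, hm⟩ := ih y (by omega) hy0 hy1
      refine ⟨m + 1, ?_⟩
      rw [Function.iterate_succ_apply]
      have hT : T (x : ℝ) = (y : ℝ) := by
        have : ¬ ((x : ℝ) ≤ 1/2) := by
          push_neg
          have := (Rat.cast_lt (K := ℝ)).mpr hx
          simpa using this
        simp only [T, if_neg this, hy]
        push_cast
        ring
      rw [hT]; exact hm

theorem stmt3 (x : ℚ) (h0 : 0 < x) (h1 : x ≤ 1) :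
    ∃ m : ℕ, T^[m] (x : ℝ) = 1 := by
  exact key x.den x le_rfl h0 h1
end

section
/- Let T : ℝ → ℝ be defined by T(x) = x/(1-x) if x ≤ 1/2 and T(x) = (2x-1)/x if x > 1/2. If x ∈ (0,1) is a periodic point of T, i.e. there exists m ≥ 1 with T^[m](x) = x, then x is a quadratic irrational: x is irrational and there exist integers a, b, c with a ≠ 0 such that a·x² + b·x + c = 0. -/
open Function Set Matrix

theorem Function.IsPeriodicPt.eq_of_iterate_eq_of_isFixedPt {α : Type*} {f : α → α} {m n : ℕ}
    {x y : α} (hx : IsPeriodicPt f m x) (hm : 0 < m) (hy : IsFixedPt f y) (h : f^[n] x = y) :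
    x = y :=
  calc x = f^[m * n] x := (hx.mul_const n).eq.symm
    _ = f^[m * n - n] (f^[n] x) := by
      rw [← iterate_add_apply, Nat.sub_add_cancel (Nat.le_mul_of_pos_left n hm)]
    _ = y := by rw [h, iterate_fixed hy]

lemma Int.add_eq_zero_of_mul_eq_mul_add_one {a b c d : ℤ} (hdet : a * d = b * c + 1)
    (h : a + c = b + d) : b + c = 0 := by
  have hs : (a - b) * (b + c + (a - b)) = 1 := by linear_combination a * h + hdet
  rcases Int.eq_one_or_neg_one_of_mul_eq_one hs with h1 | h1 <;> rw [h1] at hs <;> omega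

lemma T_of_le {x : ℝ} (h : x ≤ 1 / 2) : T x = x / (1 - x) := if_pos h

lemma T_of_gt {x : ℝ} (h : 1 / 2 < x) : T x = (2 * x - 1) / x := if_neg h.not_ge

lemma T_isFixedPt_one : IsFixedPt T 1 := by norm_num [IsFixedPt, T]

lemma exists_iterate_T_intCast_div_eq_one (n : ℕ) :
    ∀ p q : ℤ, q ≤ n → 0 < p → p < q → ∃ k, T^[k] (p / q) = 1 := by
  induction n with
  | zero => intro p q hq hp hpq; omega
  | succ n ih =>
    intro p q hq hp hpq
    have hqR : (0 : ℝ) < q := by exact_mod_cast hp.trans hpq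
    rcases lt_trichotomy (2 * p) q with h | h | h
    · obtain ⟨k, hk⟩ := ih p (q - p) (by omega) hp (by omega)
      have hle : (p / q : ℝ) ≤ 1 / 2 := by
        rw [div_le_iff₀ hqR]; linarith [show (2 * p : ℝ) < q by exact_mod_cast h]
      refine ⟨k + 1, ?_⟩
      rw [iterate_succ_apply, T_of_le hle]
      convert hk using 2
      have : (q - p : ℝ) ≠ 0 := by linarith [show (2 * p : ℝ) < q by exact_mod_cast h]
      push_cast
      field_simp
    · refine ⟨1, ?_⟩
      have hpR : (0 : ℝ) < p := by exact_mod_cast hp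
      rw [← h, iterate_one, T_of_le (by push_cast; field_simp; norm_num)]
      push_cast
      field_simp
      norm_num
    · obtain ⟨k, hk⟩ := ih (2 * p - q) p (by omega) (by omega) (by omega)
      have hgt : 1 / 2 < (p / q : ℝ) := by
        rw [lt_div_iff₀ hqR]; linarith [show (q : ℝ) < 2 * p by exact_mod_cast h]
      refine ⟨k + 1, ?_⟩
      rw [iterate_succ_apply, T_of_gt hgt]
      convert hk using 2
      have hpR : (p : ℝ) ≠ 0 := by exact_mod_cast hp.ne'
      push_cast
      field_simp

lemma irrational_of_isPeriodicPt_T {x : ℝ} (hx : x ∈ Ioo 0 1) {m : ℕ} (hm : 0 < m)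
    (hper : IsPeriodicPt T m x) : Irrational x := by
  rintro ⟨r, rfl⟩
  have hden : (0 : ℝ) < (r.den : ℤ) := by exact_mod_cast r.pos
  have hr : (r : ℝ) = r.num / (r.den : ℤ) := by push_cast; exact Rat.cast_def r
  rw [hr] at hx hper
  obtain ⟨hx0, hx1⟩ := hx
  have hnum : 0 < r.num := by exact_mod_cast (div_pos_iff_of_pos_right hden).1 hx0
  have hlt : r.num < r.den := by exact_mod_cast (div_lt_one hden).1 hx1
  obtain ⟨k, hk⟩ := exists_iterate_T_intCast_div_eq_one r.den r.num r.den le_rfl hnum hlt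
  exact hx1.ne (hper.eq_of_iterate_eq_of_isFixedPt hm T_isFixedPt_one hk)

def MobiusRel (M : Matrix (Fin 2) (Fin 2) ℕ) (x y : ℝ) : Prop :=
  ∃ r : ℝ, ![x, 1 - x] = r • (M.map (Nat.cast : ℕ → ℝ) *ᵥ ![y, 1 - y])

lemma MobiusRel.mul {M N : Matrix (Fin 2) (Fin 2) ℕ} {x y z : ℝ} (hM : MobiusRel M x y)
    (hN : MobiusRel N y z) : MobiusRel (M * N) x z := by
  obtain ⟨r, hr⟩ := hM
  obtain ⟨s, hs⟩ := hN
  have hmap : (M * N).map (Nat.cast : ℕ → ℝ) = M.map Nat.cast * N.map Nat.cast :=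
    Matrix.map_mul (f := Nat.castRingHom ℝ)
  exact ⟨r * s, by rw [hr, hs, mulVec_smul, smul_smul, mulVec_mulVec, hmap]⟩

def sternBrocotGenerators : Set (Matrix (Fin 2) (Fin 2) ℕ) :=
  {!![1, 0; 1, 1], !![1, 1; 0, 1]}

lemma mobiusRel_T (y : ℝ) :
    ∃ G ∈ sternBrocotGenerators, MobiusRel G y (T y) := by
  rcases le_or_gt y (1 / 2) with h | h
  · refine ⟨_, Or.inl rfl, 1 - y, ?_⟩
    have : 1 - y ≠ 0 := by linarith
    ext i
    fin_cases i <;> simp [T_of_le h]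
    field_simp
  · refine ⟨_, Or.inr rfl, y, ?_⟩
    have : y ≠ 0 := by linarith
    ext i
    fin_cases i <;> simp [T_of_gt h]
    field_simp
    ring

def IsNontrivialSL2 (M : Matrix (Fin 2) (Fin 2) ℕ) : Prop :=
  M 0 0 * M 1 1 = M 0 1 * M 1 0 + 1 ∧ 0 < M 0 1 + M 1 0

lemma isNontrivialSL2_mul {M G : Matrix (Fin 2) (Fin 2) ℕ}
    (hM : M 0 0 * M 1 1 = M 0 1 * M 1 0 + 1)
    (hG : G ∈ sternBrocotGenerators) : IsNontrivialSL2 (M * G) := by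
  have ha : 0 < M 0 0 := Nat.pos_of_ne_zero fun h => by simp [h] at hM
  have hd : 0 < M 1 1 := Nat.pos_of_ne_zero fun h => by simp [h] at hM
  rcases hG with rfl | rfl <;> simp [IsNontrivialSL2, mul_apply, Fin.sum_univ_two] <;>
    exact ⟨by linarith, by omega⟩

lemma exists_quadratic_of_mobiusRel_self {M : Matrix (Fin 2) (Fin 2) ℕ} (hM : IsNontrivialSL2 M)
    {x : ℝ} (h : MobiusRel M x x) :
    ∃ a b c : ℤ, a ≠ 0 ∧ (a : ℝ) * x ^ 2 + b * x + c = 0 := by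
  obtain ⟨r, hr⟩ := h
  have h0 := congrFun hr 0
  have h1 := congrFun hr 1
  simp only [Fin.isValue, cons_val_zero, cons_val_one, Pi.smul_apply, smul_eq_mul,
    mulVec, dotProduct, Fin.sum_univ_two, map_apply] at h0 h1
  obtain ⟨hdet, hbc⟩ := hM
  set a := M 0 0
  set b := M 0 1
  set c := M 1 0
  set d := M 1 1
  refine ⟨a + c - b - d, d - a + 2 * b, -b, fun h => ?_, ?_⟩
  · have := Int.add_eq_zero_of_mul_eq_mul_add_one (a := a) (b := b) (c := c) (d := d)
      (by exact_mod_cast hdet) (by linarith)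
    omega
  · push_cast
    linear_combination (c * x + d * (1 - x)) * h0 - (a * x + b * (1 - x)) * h1

lemma exists_mobiusRel_iterate_T (x : ℝ) {m : ℕ} (hm : 0 < m) :
    ∃ M, IsNontrivialSL2 M ∧ MobiusRel M x (T^[m] x) := by
  induction m, hm using Nat.le_induction with
  | base =>
    obtain ⟨G, hG, hrel⟩ := mobiusRel_T x
    exact ⟨G, by simpa using isNontrivialSL2_mul (M := 1) (by simp) hG, hrel⟩
  | succ k _ ih =>
    obtain ⟨M, hM, hrel⟩ := ih
    obtain ⟨G, hG, hstep⟩ := mobiusRel_T (T^[k] x)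
    rw [iterate_succ_apply']
    exact ⟨M * G, isNontrivialSL2_mul hM.1 hG, hrel.mul hstep⟩

theorem stmt5 (x : ℝ) (hx : x ∈ Set.Ioo (0:ℝ) 1)
    (hper : ∃ m : ℕ, 1 ≤ m ∧ T^[m] x = x) :
    Irrational x ∧ ∃ a b c : ℤ, a ≠ 0 ∧ (a : ℝ) * x^2 + (b : ℝ) * x + (c : ℝ) = 0 := by
  obtain ⟨m, hm, hxm⟩ := hper
  refine ⟨irrational_of_isPeriodicPt_T hx hm hxm, ?_⟩
  obtain ⟨M, hM, hrel⟩ := exists_mobiusRel_iterate_T x hm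
  rw [hxm] at hrel
  exact exists_quadratic_of_mobiusRel_self hM hrel
end

section
/- Let T : ℝ → ℝ be defined by T(x) = x/(1-x) if x ≤ 1/2 and T(x) = (2x-1)/x if x > 1/2. For every natural number b ≥ 1, let φ_b = (√(b²+4) - b)/2 be the fractional part of the b-th metallic ratio (the positive root of x² + b·x - 1 = 0). Then φ_b is a periodic point of T of exact period 2b: T^[2b](φ_b) = φ_b, and T^[j](φ_b) ≠ φ_b for every j with 0 < j < 2b. In particular T admits periodic orbits of arbitrarily large period. -/
/-!
Since `φ = 1 / (b + φ)`, the left branch of `T` walks `φ` down the points `1 / (c + φ)`,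
`c = b, b - 1, …, 1`, lowering `c` by one at each step; at `1 / (1 + φ) > 1/2` the right branch
sends it to `1 - φ = 1 - 1 / (b + φ)`, from which the mirrored walk through `1 - 1 / (c + φ)`
returns to `1 - 1 / (1 + φ) ≤ 1/2`, and one more step gives back `φ`. None of the intermediate
points is `φ`: the left ones have the wrong denominator, and `1 - 1 / (c + φ) = φ` contradicts
`φ ^ 2 + b φ = 1` for every integer `1 ≤ c ≤ b`.
-/

lemma T_of_le_half {x : ℝ} (hx : x ≤ 1 / 2) : T x = x / (1 - x) := if_pos hx

lemma T_of_half_lt {x : ℝ} (hx : 1 / 2 < x) : T x = (2 * x - 1) / x := if_neg hx.not_ge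

lemma T_one_div_add_one {u : ℝ} (hu : 1 ≤ u) : T (1 / (u + 1)) = 1 / u := by
  have hu₀ : u ≠ 0 := by positivity
  rw [T_of_le_half (by rw [div_le_div_iff₀ (by linarith) two_pos]; linarith),
    one_sub_div (by positivity), add_sub_cancel_right]
  field_simp

lemma T_one_sub_one_div_add_one {u : ℝ} (hu : 1 < u) : T (1 - 1 / (u + 1)) = 1 - 1 / u := by
  have hu₀ : u ≠ 0 := by positivity
  have hlt : 1 / (u + 1) < 1 / 2 := by rw [div_lt_div_iff₀ (by linarith) two_pos]; linarith
  rw [T_of_half_lt (by linarith), one_sub_div (by positivity), add_sub_cancel_right]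
  field_simp
  ring

lemma T_one_div_one_add {x : ℝ} (hx₀ : 0 < x) (hx₁ : x < 1) : T (1 / (1 + x)) = 1 - x := by
  rw [T_of_half_lt (by rw [div_lt_div_iff₀ two_pos (by linarith)]; linarith)]
  field_simp
  ring

lemma T_one_sub_one_div_one_add {x : ℝ} (hx₀ : 0 ≤ x) (hx₁ : x ≤ 1) :
    T (1 - 1 / (1 + x)) = x := by
  have hle : 1 / 2 ≤ 1 / (1 + x) := by rw [div_le_div_iff₀ two_pos (by linarith)]; linarith
  rw [T_of_le_half (by linarith)]
  field_simp
  ring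

lemma T_iterate_one_div {y : ℝ} (hy : 1 ≤ y) (n : ℕ) : T^[n] (1 / (n + y)) = 1 / y := by
  induction n generalizing y with
  | zero => simp
  | succ n ih =>
    rw [Function.iterate_succ_apply', Nat.cast_succ, add_assoc, add_comm 1 y,
      ih (by linarith), T_one_div_add_one hy]

lemma T_iterate_one_sub_one_div {y : ℝ} (hy : 1 < y) (n : ℕ) :
    T^[n] (1 - 1 / (n + y)) = 1 - 1 / y := by
  induction n generalizing y with
  | zero => simp
  | succ n ih =>
    rw [Function.iterate_succ_apply', Nat.cast_succ, add_assoc, add_comm 1 y,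
      ih (by linarith), T_one_sub_one_div_add_one hy]

lemma one_lt_nat_sub_add {φ : ℝ} (hφ₀ : 0 < φ) {b i : ℕ} (hi : i < b) :
    1 < ((b - i : ℕ) : ℝ) + φ := by
  have : (1 : ℝ) ≤ (b - i : ℕ) := by exact_mod_cast (by omega)
  linarith

section Orbit

variable {φ : ℝ} {b : ℕ} (hφ₀ : 0 < φ) (hφ : φ * (b + φ) = 1)
include hφ₀ hφ

lemma eq_one_div_nat_add (i : ℕ) (hi : i ≤ b) : φ = 1 / (i + ((b - i : ℕ) + φ)) := by
  rw [← add_assoc, ← Nat.cast_add, Nat.add_sub_cancel' hi, eq_div_iff (by positivity)]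
  exact hφ

lemma T_iterate_of_lt {j : ℕ} (hj : j < b) : T^[j] φ = 1 / ((b - j : ℕ) + φ) := by
  conv_lhs => rw [eq_one_div_nat_add hφ₀ hφ j hj.le]
  exact T_iterate_one_div (one_lt_nat_sub_add hφ₀ hj).le j

lemma T_iterate_add_of_lt (hφ₁ : φ < 1) {i : ℕ} (hi : i < b) :
    T^[b + i] φ = 1 - 1 / ((b - i : ℕ) + φ) := by
  have hturn : T^[b] φ = 1 - φ := by
    obtain ⟨k, rfl⟩ : ∃ k, b = k + 1 := ⟨b - 1, by omega⟩
    rw [Function.iterate_succ_apply', T_iterate_of_lt hφ₀ hφ k.lt_succ_self,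
      Nat.add_sub_cancel_left, Nat.cast_one, T_one_div_one_add hφ₀ hφ₁]
  rw [add_comm, Function.iterate_add_apply, hturn]
  conv_lhs => rw [eq_one_div_nat_add hφ₀ hφ i hi.le]
  exact T_iterate_one_sub_one_div (one_lt_nat_sub_add hφ₀ hi) i

lemma T_iterate_two_mul (hφ₁ : φ < 1) (hb : 0 < b) : T^[2 * b] φ = φ := by
  obtain ⟨k, rfl⟩ : ∃ k, b = k + 1 := ⟨b - 1, by omega⟩
  rw [show 2 * (k + 1) = k + 1 + k + 1 by ring, Function.iterate_succ_apply',
    T_iterate_add_of_lt hφ₀ hφ hφ₁ k.lt_succ_self, Nat.add_sub_cancel_left, Nat.cast_one,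
    T_one_sub_one_div_one_add hφ₀.le hφ₁.le]

lemma one_div_nat_add_ne {m : ℕ} (hm : m ≠ b) : 1 / (m + φ) ≠ φ := by
  intro h
  rw [div_eq_iff (by positivity), ← hφ] at h
  exact hm (by exact_mod_cast (add_right_cancel (mul_left_cancel₀ hφ₀.ne' h)).symm)

lemma one_sub_one_div_nat_add_ne {m : ℕ} (hm₁ : 1 ≤ m) (hmb : m ≤ b) :
    1 - 1 / (m + φ) ≠ φ := by
  intro h
  -- with `φ ^ 2 = 1 - b φ` this reads `m - 2 + (b + 1 - m) φ = 0`
  have h' : (1 - φ) * (m + φ) = 1 := by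
    rw [← eq_div_iff (by positivity)]
    linarith
  rcases hm₁.eq_or_lt with rfl | hm₂
  · rw [Nat.cast_one] at h'
    nlinarith
  · have : (2 : ℝ) ≤ m := by exact_mod_cast hm₂
    have : (m : ℝ) ≤ b := by exact_mod_cast hmb
    nlinarith

lemma T_iterate_ne (hφ₁ : φ < 1) {j : ℕ} (hj₀ : 0 < j) (hj : j < 2 * b) :
    T^[j] φ ≠ φ := by
  rcases lt_or_ge j b with hjb | hbj
  · rw [T_iterate_of_lt hφ₀ hφ hjb]
    exact one_div_nat_add_ne hφ₀ hφ (by omega)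
  · obtain ⟨i, rfl⟩ : ∃ i, j = b + i := ⟨j - b, by omega⟩
    rw [T_iterate_add_of_lt hφ₀ hφ hφ₁ (by omega)]
    exact one_sub_one_div_nat_add_ne hφ₀ hφ (by omega) (by omega)

end Orbit

noncomputable def metallicFrac (b : ℝ) : ℝ := (Real.sqrt (b ^ 2 + 4) - b) / 2

lemma metallicFrac_mul_add (b : ℝ) : metallicFrac b * (b + metallicFrac b) = 1 := by
  unfold metallicFrac
  linear_combination Real.sq_sqrt (by positivity : 0 ≤ b ^ 2 + 4) / 4

lemma metallicFrac_pos (b : ℝ) : 0 < metallicFrac b := by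
  have : b < Real.sqrt (b ^ 2 + 4) := Real.lt_sqrt_of_sq_lt (by linarith)
  unfold metallicFrac
  linarith

lemma metallicFrac_lt_one {b : ℝ} (hb : 0 < b) : metallicFrac b < 1 := by
  have : Real.sqrt (b ^ 2 + 4) < b + 2 := (Real.sqrt_lt' (by linarith)).2 (by nlinarith)
  unfold metallicFrac
  linarith

theorem stmt7 (b : ℕ) (hb : 1 ≤ b) :
    T^[2 * b] ((Real.sqrt ((b : ℝ)^2 + 4) - b) / 2) = (Real.sqrt ((b : ℝ)^2 + 4) - b) / 2 ∧
    ∀ j : ℕ, 0 < j → j < 2 * b →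
      T^[j] ((Real.sqrt ((b : ℝ)^2 + 4) - b) / 2) ≠ (Real.sqrt ((b : ℝ)^2 + 4) - b) / 2 := by
  have hφ₀ := metallicFrac_pos b
  have hφ := metallicFrac_mul_add b
  have hφ₁ := metallicFrac_lt_one (b := b) (by exact_mod_cast hb)
  exact ⟨T_iterate_two_mul hφ₀ hφ hφ₁ hb,
    fun _ hj₀ hj => T_iterate_ne hφ₀ hφ hφ₁ hj₀ hj⟩
end

section
/- Let T : ℝ → ℝ be defined by T(x) = x/(1-x) if x ≤ 1/2 and T(x) = (2x-1)/x if x > 1/2. If x ∈ (0,1) is irrational and is not a root of any quadratic polynomial with integer coefficients (i.e. x is either transcendental or algebraic of degree greater than 2), then the orbit of x under T is not eventually periodic: for all k ≥ 0 and all m ≥ 1, T^[k+m](x) ≠ T^[k](x). -/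
/-!
Both branches of `T` are integral Möbius maps of determinant one, `z ↦ z / (1 - z)` and
`z ↦ (2z - 1) / z`, and their denominators `1 - z` and `z` lie in `(0, 1)` along the orbit.
Hence `T^[m+1] y = (a y + b) / (c y + d)` with integers `a, b, c, d` and `0 < c y + d < 1`.
A periodic point `y = T^[m+1] y` then satisfies `c y² + (d - a) y - b = 0`. If `1, y, y²` are
linearly independent over `ℤ`, this forces `c = 0`, so `0 < d < 1`, which is absurd for an
integer. That independence holds for `x` and is preserved by integral Möbius maps of nonzero
determinant, hence along the whole orbit.
-/

def NoQuadraticRelation (x : ℝ) : Prop :=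
  ∀ A B C : ℤ, (A : ℝ) * x ^ 2 + B * x + C = 0 → A = 0 ∧ B = 0 ∧ C = 0

lemma noQuadraticRelation_of_irrational {x : ℝ} (hirr : Irrational x)
    (hnq : ¬ ∃ a b c : ℤ, a ≠ 0 ∧ (a : ℝ) * x ^ 2 + (b : ℝ) * x + (c : ℝ) = 0) :
    NoQuadraticRelation x := by
  intro A B C h
  obtain rfl : A = 0 := by_contra fun hA => hnq ⟨A, B, C, hA, h⟩
  obtain rfl : B = 0 := by
    by_contra hB
    refine hirr ⟨-C / B, ?_⟩
    push_cast at h ⊢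
    rw [div_eq_iff (by exact_mod_cast hB)]
    linear_combination -h
  exact ⟨rfl, rfl, by exact_mod_cast (by simpa using h : (C : ℝ) = 0)⟩

lemma NoQuadraticRelation.ne_half {x : ℝ} (hx : NoQuadraticRelation x) : x ≠ 1 / 2 := by
  rintro rfl
  have := (hx 0 2 (-1) (by norm_num)).2.1
  norm_num at this

lemma NoQuadraticRelation.mobius {x : ℝ} (hx : NoQuadraticRelation x) {a b c d : ℤ}
    (hdet : a * d - b * c ≠ 0) (hD : (c : ℝ) * x + d ≠ 0) :
    NoQuadraticRelation ((a * x + b) / (c * x + d)) := by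
  intro A B C h
  set z := (a * x + b) / (c * x + d)
  have hz : z * (c * x + d) = a * x + b := div_mul_cancel₀ _ hD
  -- the relation for `z`, cleared of the denominator `(c x + d)²`, is a relation for `x`
  obtain ⟨h₁, h₂, h₃⟩ := hx (A * a ^ 2 + B * a * c + C * c ^ 2)
    (2 * A * a * b + B * (a * d + b * c) + 2 * C * c * d) (A * b ^ 2 + B * b * d + C * d ^ 2) (by
      push_cast
      linear_combination (c * x + d) ^ 2 * h
        - (A * (a * x + b + z * (c * x + d)) + B * (c * x + d)) * hz)
  have hdet2 : (a * d - b * c) ^ 2 ≠ 0 := pow_ne_zero 2 hdet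
  -- `h₁, h₂, h₃` are the coefficients of `Q(aX + bY, cX + dY)` for `Q = AX² + BXY + CY²`;
  -- evaluating at `(d, -c)`, `(-b, a)`, `(d - b, a - c)` recovers `Q` scaled by `(ad - bc)²`
  have hA : A * (a * d - b * c) ^ 2 = 0 := by
    linear_combination d ^ 2 * h₁ - c * d * h₂ + c ^ 2 * h₃
  have hB : B * (a * d - b * c) ^ 2 = 0 := by
    linear_combination -2 * b * d * h₁ + (a * d + b * c) * h₂ - 2 * a * c * h₃
  have hC : C * (a * d - b * c) ^ 2 = 0 := by
    linear_combination b ^ 2 * h₁ - a * b * h₂ + a ^ 2 * h₃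
  exact ⟨(mul_eq_zero.1 hA).resolve_right hdet2, (mul_eq_zero.1 hB).resolve_right hdet2,
    (mul_eq_zero.1 hC).resolve_right hdet2⟩

lemma T_mem_Ioo {z : ℝ} (hz : z ∈ Set.Ioo (0 : ℝ) 1) (hhalf : z ≠ 1 / 2) :
    T z ∈ Set.Ioo (0 : ℝ) 1 := by
  obtain ⟨hz₀, hz₁⟩ := hz
  unfold T
  split_ifs with hle
  · have hlt : z < 1 / 2 := lt_of_le_of_ne hle hhalf
    exact ⟨div_pos hz₀ (by linarith), (div_lt_one (by linarith)).2 (by linarith)⟩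
  · exact ⟨div_pos (by linarith) hz₀, (div_lt_one hz₀).2 (by linarith)⟩

lemma exists_T_eq_mobius {z : ℝ} (hz : z ∈ Set.Ioo (0 : ℝ) 1) :
    ∃ u v w t : ℤ, u * t - v * w = 1 ∧ T z = (u * z + v) / (w * z + t) ∧
      0 < (w : ℝ) * z + t ∧ (w : ℝ) * z + t < 1 := by
  obtain ⟨hz₀, hz₁⟩ := hz
  unfold T
  split_ifs
  · exact ⟨1, 0, -1, 1, by norm_num, by push_cast; ring_nf, by push_cast; linarith,
      by push_cast; linarith⟩
  · exact ⟨2, -1, 1, 0, by norm_num, by push_cast; ring_nf, by push_cast; linarith,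
      by push_cast; linarith⟩

lemma mapsTo_T :
    Set.MapsTo T {z | z ∈ Set.Ioo (0 : ℝ) 1 ∧ NoQuadraticRelation z}
      {z | z ∈ Set.Ioo (0 : ℝ) 1 ∧ NoQuadraticRelation z} := by
  rintro z ⟨hz, hq⟩
  obtain ⟨u, v, w, t, hdet, hT, hpos, -⟩ := exists_T_eq_mobius hz
  refine ⟨T_mem_Ioo hz hq.ne_half, ?_⟩
  rw [hT]
  exact hq.mobius (by rw [hdet]; exact one_ne_zero) hpos.ne'

lemma exists_iterate_T_eq_mobius {y : ℝ} (hy : y ∈ Set.Ioo (0 : ℝ) 1)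
    (hq : NoQuadraticRelation y) (m : ℕ) :
    ∃ a b c d : ℤ, T^[m + 1] y = (a * y + b) / (c * y + d) ∧
      0 < (c : ℝ) * y + d ∧ (c : ℝ) * y + d < 1 := by
  induction m with
  | zero =>
    obtain ⟨u, v, w, t, -, hT, hpos, hlt⟩ := exists_T_eq_mobius hy
    exact ⟨u, v, w, t, hT, hpos, hlt⟩
  | succ n ih =>
    obtain ⟨a, b, c, d, hz, hD₀, hD₁⟩ := ih
    obtain ⟨hmem, -⟩ := mapsTo_T.iterate (n + 1) ⟨hy, hq⟩
    obtain ⟨u, v, w, t, -, hT, hpos, hlt⟩ := exists_T_eq_mobius hmem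
    have hnum : ((u * a + v * c : ℤ) : ℝ) * y + (u * b + v * d : ℤ)
        = (u * T^[n + 1] y + v) * (c * y + d) := by
      rw [hz]; push_cast; field_simp; ring
    -- the new denominator is the product `(w z + t) (c y + d)` of two numbers in `(0, 1)`
    have hden : ((w * a + t * c : ℤ) : ℝ) * y + (w * b + t * d : ℤ)
        = (w * T^[n + 1] y + t) * (c * y + d) := by
      rw [hz]; push_cast; field_simp; ring
    refine ⟨u * a + v * c, u * b + v * d, w * a + t * c, w * b + t * d, ?_, ?_, ?_⟩
    · rw [Function.iterate_succ_apply', hT, hnum, hden, mul_div_mul_right _ _ hD₀.ne']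
    · rw [hden]; positivity
    · rw [hden]; nlinarith

lemma iterate_T_ne_self {y : ℝ} (hy : y ∈ Set.Ioo (0 : ℝ) 1) (hq : NoQuadraticRelation y)
    {m : ℕ} (hm : 1 ≤ m) : T^[m] y ≠ y := by
  obtain ⟨n, rfl⟩ := Nat.exists_eq_add_of_le' hm
  obtain ⟨a, b, c, d, hT, hD₀, hD₁⟩ := exists_iterate_T_eq_mobius hy hq n
  intro hfix
  rw [hT, div_eq_iff hD₀.ne'] at hfix
  obtain ⟨rfl, -, -⟩ := hq c (d - a) (-b) (by push_cast; linear_combination -hfix)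
  have hd₀ : (0 : ℤ) < d := by exact_mod_cast (by simpa using hD₀ : (0 : ℝ) < d)
  have hd₁ : d < 1 := by exact_mod_cast (by simpa using hD₁ : (d : ℝ) < 1)
  omega

theorem stmt13 (x : ℝ) (hx : x ∈ Set.Ioo (0:ℝ) 1) (hirr : Irrational x)
    (hnq : ¬ ∃ a b c : ℤ, a ≠ 0 ∧ (a : ℝ) * x^2 + (b : ℝ) * x + (c : ℝ) = 0) :
    ∀ k m : ℕ, 1 ≤ m → T^[k + m] x ≠ T^[k] x := by
  intro k m hm
  obtain ⟨hmem, hq⟩ := mapsTo_T.iterate k ⟨hx, noQuadraticRelation_of_irrational hirr hnq⟩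
  rw [add_comm, Function.iterate_add_apply]
  exact iterate_T_ne_self hmem hq hm
end
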